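/- Let G be a minimal counterexample (fewest vertices, then most edges) among planar graphs of maximum degree Δ ≤ 6 with χ₂(G) > 21. Then G does not contain a vertex of degree 3 incident to a triangular face. -/

import Mathlib

open SimpleGraph

/-- The square of a graph `G`: two distinct vertices are adjacent iff they are at
distance at most 2 in `G`. -/
def SimpleGraph.square {V : Type*} (G : SimpleGraph V) : SimpleGraph V where
  Adj u v := u ≠ v ∧ (G.Adj u v ∨ ∃ w, G.Adj u w ∧ G.Adj w v)
  symm := ⟨fun u v ⟨h1, h2⟩ => ⟨h1.symm, h2.elim (fun h => Or.inl h.symm)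
    (fun ⟨w, h3, h4⟩ => Or.inr ⟨w, h4.symm, h3.symm⟩)⟩⟩
  loopless := ⟨fun _ h => h.1 rfl⟩

/-- The 2-chromatic number of a graph: the chromatic number of its square. -/
noncomputable def chi2 {V : Type*} (G : SimpleGraph V) : ℕ∞ :=
  G.square.chromaticNumber

/-- The degree of a vertex, as a cardinality (instance-free). -/
noncomputable def degN {V : Type*} (G : SimpleGraph V) (v : V) : ℕ :=
  Nat.card {u // G.Adj v u}

/-- `G` has maximum degree `Δ`. -/
def maxDegIs {V : Type*} (G : SimpleGraph V) (Δ : ℕ) : Prop :=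
  (∀ v, degN G v ≤ Δ) ∧ ∃ v, degN G v = Δ

/-- A graph is planar if it has a drawing in the plane: an injective placement of the
vertices and, for each edge, a simple arc joining the endpoints, such that arcs avoid
all vertex points and the interiors of arcs of distinct edges are disjoint. -/
def IsPlanar {V : Type*} (G : SimpleGraph V) : Prop :=
  ∃ (pos : V → ℝ × ℝ) (arc : V → V → ℝ → ℝ × ℝ),
    Function.Injective pos ∧
    (∀ u v, G.Adj u v →
      Continuous (arc u v) ∧ arc u v 0 = pos u ∧ arc u v 1 = pos v ∧
      Set.InjOn (arc u v) (Set.Icc 0 1) ∧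
      ∀ w, pos w ∉ arc u v '' Set.Ioo 0 1) ∧
    ∀ u v x y, G.Adj u v → G.Adj x y → s(u, v) ≠ s(x, y) →
      Disjoint (arc u v '' Set.Ioo 0 1) (arc x y '' Set.Ioo 0 1)

/-- `G` is a minimal counterexample (fewest vertices, then most edges) among planar
graphs of maximum degree at most `6` to the bound `χ₂ ≤ 21`. -/
def MinimalCex6 {V : Type*} [Fintype V] (G : SimpleGraph V) : Prop :=
  IsPlanar G ∧ (∀ v, degN G v ≤ 6) ∧ (21 : ℕ∞) < chi2 G ∧
  ∀ (n : ℕ) (H : SimpleGraph (Fin n)), IsPlanar H →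
    (∀ v, degN H v ≤ 6) →
    (n < Fintype.card V ∨
      (n = Fintype.card V ∧ Nat.card G.edgeSet < Nat.card H.edgeSet)) →
    chi2 H ≤ (21 : ℕ∞)

section Comb

variable {V : Type*} [Fintype V] [DecidableEq V] (G : SimpleGraph V) [DecidableRel G.Adj]

/-- The involution exchanging the two darts of each edge. -/
def dartSymmPerm : Equiv.Perm G.Dart :=
  ⟨SimpleGraph.Dart.symm, SimpleGraph.Dart.symm,
    fun d => d.symm_symm, fun d => d.symm_symm⟩

/-- A combinatorial plane embedding (rotation system) of `G`: a permutation of the darts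
whose cycles are exactly the sets of darts sharing a tail vertex. -/
structure PlaneEmbedding where
  rot : Equiv.Perm G.Dart
  same_vertex : ∀ d d' : G.Dart, rot.SameCycle d d' ↔ d.toProd.1 = d'.toProd.1

variable {G}

/-- The face-tracing permutation of an embedding. -/
def PlaneEmbedding.facePerm (e : PlaneEmbedding G) : Equiv.Perm G.Dart :=
  e.rot * dartSymmPerm G

/-- Darts lying on the same face. -/
def PlaneEmbedding.faceSetoid (e : PlaneEmbedding G) : Setoid G.Dart :=
  ⟨e.facePerm.SameCycle,
    ⟨fun _ => Equiv.Perm.SameCycle.refl _ _, fun h => h.symm, fun h h' => h.trans h'⟩⟩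

/-- The faces of an embedding: orbits of the face-tracing permutation on darts. -/
def PlaneEmbedding.Faces (e : PlaneEmbedding G) : Type _ := Quotient e.faceSetoid

/-- The degree of a face: the number of darts on it (so cut-edges count twice). -/
noncomputable def PlaneEmbedding.faceDeg (e : PlaneEmbedding G) (f : e.Faces) : ℕ :=
  Nat.card {d : G.Dart // Quotient.mk e.faceSetoid d = f}

/-- A vertex is incident to a face if some dart of the face has it as tail. -/
def PlaneEmbedding.VertexOnFace (e : PlaneEmbedding G) (v : V) (f : e.Faces) : Prop :=
  ∃ d : G.Dart, d.toProd.1 = v ∧ Quotient.mk e.faceSetoid d = f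

/-- A vertex is triangulated if all its incident faces are triangles. -/
def PlaneEmbedding.Triangulated (e : PlaneEmbedding G) (v : V) : Prop :=
  ∀ f : e.Faces, e.VertexOnFace v f → e.faceDeg f = 3

noncomputable instance (e : PlaneEmbedding G) : Fintype e.Faces :=
  @Fintype.ofFinite _ (Quotient.finite _)

/-- The embedding is on the sphere: Euler's formula holds. -/
def PlaneEmbedding.IsSphere (e : PlaneEmbedding G) : Prop :=
  (Fintype.card V : ℤ) - G.edgeFinset.card + Nat.card e.Faces = 2

end Comb

/-!
Let `v` be a `3`-vertex on a triangular face `v a b`, and `z` its third neighbour. Delete `v`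
and add the edge `a z`. The result is planar (draw `a z` along the path `a v z`), still has
maximum degree at most `6` (`a` and `z` trade `v` for each other) and has fewer vertices, so
by minimality its square is `21`-colourable. As `a` is adjacent to both `b` and `z` there, any
two neighbours of `v` stay at distance at most `2`, so this is a partial square-colouring of
`G`. At most `3 · 6 = 18` vertices lie within distance `2` of `v`, so a colour is left for `v`.
-/

namespace PlaneEmbedding

variable {V : Type*} {G : SimpleGraph V} (e : PlaneEmbedding G)

lemma rot_fst (d : G.Dart) : (e.rot d).fst = d.fst :=
  ((e.same_vertex d (e.rot d)).1 ⟨1, by simp⟩).symm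

lemma facePerm_fst (d : G.Dart) : (e.facePerm d).fst = d.snd :=
  e.rot_fst d.symm

lemma faceDeg_eq_minimalPeriod [Finite V] {d : G.Dart} {f : e.Faces}
    (hd : Quotient.mk e.faceSetoid d = f) : e.faceDeg f = Function.minimalPeriod e.facePerm d := by
  classical
  have horbit : ∀ d', d' ∈ MulAction.orbit (Subgroup.zpowers e.facePerm) d ↔
      Quotient.mk e.faceSetoid d' = f := by
    intro d'
    simp only [MulAction.mem_orbit_iff, Subtype.exists, Subgroup.mem_zpowers_iff, ← hd,
      Quotient.eq]
    constructor
    · rintro ⟨_, ⟨k, rfl⟩, rfl⟩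
      exact ⟨-k, by simp⟩
    · rintro ⟨k, hk⟩
      exact ⟨_, ⟨-k, rfl⟩, by simp [Equiv.Perm.smul_def, ← hk]⟩
  have := Fintype.ofFinite V
  rw [faceDeg, Nat.card_eq_fintype_card]
  exact (Fintype.card_congr (Equiv.subtypeEquivRight horbit)).symm.trans
    (MulAction.minimalPeriod_eq_card e.facePerm d).symm

lemma facePerm_pow_faceDeg_apply [Finite V] {d : G.Dart} {f : e.Faces}
    (hd : Quotient.mk e.faceSetoid d = f) : (e.facePerm ^ e.faceDeg f) d = d := by
  rw [e.faceDeg_eq_minimalPeriod hd, ← Equiv.Perm.iterate_eq_pow]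
  exact Function.iterate_minimalPeriod

lemma exists_triangle_of_faceDeg_eq_three [Finite V] {f : e.Faces} (hf : e.faceDeg f = 3)
    {v : V} (hv : e.VertexOnFace v f) : ∃ a b, G.Adj v a ∧ G.Adj a b ∧ G.Adj b v := by
  obtain ⟨d, rfl, hd⟩ := hv
  have hcycle := e.facePerm_pow_faceDeg_apply hd
  simp only [hf, pow_succ, pow_zero, one_mul, Equiv.Perm.mul_apply] at hcycle
  refine ⟨d.snd, (e.facePerm d).snd, d.adj, ?_, ?_⟩
  · simpa only [e.facePerm_fst] using (e.facePerm d).adj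
  · have := (e.facePerm (e.facePerm d)).adj
    rwa [e.facePerm_fst, ← e.facePerm_fst (e.facePerm (e.facePerm d)), hcycle] at this

end PlaneEmbedding

namespace SimpleGraph

variable {V : Type*} {G : SimpleGraph V}

lemma square_adj_of_mem_insert_neighborSet {x p q : V} (hp : p ∈ insert x (G.neighborSet x))
    (hq : q ∈ insert x (G.neighborSet x)) (hpq : p ≠ q) : G.square.Adj p q := by
  refine ⟨hpq, ?_⟩
  rcases hp with rfl | hp <;> rcases hq with rfl | hq
  · exact absurd rfl hpq
  · exact Or.inl hq
  · exact Or.inl (G.adj_symm hp)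
  · exact Or.inr ⟨x, G.adj_symm hp, hq⟩

def Embedding.squareHom {W : Type*} {H : SimpleGraph W} (f : G ↪g H) :
    G.square →g H.square where
  toFun := f
  map_rel' := fun ⟨hne, h⟩ => ⟨f.injective.ne hne, h.imp f.map_adj_iff.2
    fun ⟨m, hum, hmw⟩ => ⟨f m, f.map_adj_iff.2 hum, f.map_adj_iff.2 hmw⟩⟩

lemma square_induce_compl_singleton_le {v : V} {H : SimpleGraph ↥({v}ᶜ : Set V)}
    (hGH : G.induce {v}ᶜ ≤ H)
    (hN : ∀ p q : ↥({v}ᶜ : Set V), p ≠ q → G.Adj v p → G.Adj v q → H.square.Adj p q) :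
    G.square.induce {v}ᶜ ≤ H.square := by
  rintro p q ⟨hne, hpq | ⟨m, hpm, hmq⟩⟩
  · exact ⟨fun h => hne (congrArg Subtype.val h), Or.inl (hGH hpq)⟩
  · by_cases hm : m = v
    · subst hm
      exact hN p q (fun h => hne (congrArg Subtype.val h)) hpm.symm hmq
    · exact ⟨fun h => hne (congrArg Subtype.val h), Or.inr ⟨⟨m, hm⟩, hGH hpm, hGH hmq⟩⟩

lemma Colorable.of_induce_compl_singleton {S : SimpleGraph V} {v : V}
    [Fintype (S.neighborSet v)] {n : ℕ} (h : (S.induce {v}ᶜ).Colorable n)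
    (hv : S.degree v < n) : S.Colorable n := by
  classical
  obtain ⟨c⟩ := h
  let usedColors : Finset (Fin n) :=
    Finset.univ.image fun u : S.neighborSet v => c ⟨u, (S.ne_of_adj u.2).symm⟩
  obtain ⟨k, -, hk⟩ : ∃ k ∈ Finset.univ, k ∉ usedColors := by
    refine Finset.exists_mem_notMem_of_card_lt_card ?_
    calc usedColors.card ≤ S.degree v := by
          rw [← card_neighborSet_eq_degree]; exact Finset.card_image_le
      _ < _ := by simpa using hv
  have hfree : ∀ (u : V) (hu : u ≠ v), S.Adj v u → c ⟨u, hu⟩ ≠ k := fun u hu huv h =>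
    hk (Finset.mem_image.2 ⟨⟨u, huv⟩, Finset.mem_univ _, h⟩)
  refine ⟨Coloring.mk (fun u => if hu : u = v then k else c ⟨u, hu⟩) ?_⟩
  intro u w huw
  by_cases hu : u = v <;> by_cases hw : w = v
  · exact absurd (hu.trans hw.symm) huw.ne
  · subst hu; simpa [hw] using (hfree w hw huw).symm
  · subst hw; simpa [hu] using hfree u hu huw.symm
  · simpa [hu, hw] using c.valid (show (S.induce {v}ᶜ).Adj ⟨u, hu⟩ ⟨w, hw⟩ from huw)

lemma degN_eq_degree (v : V) [Fintype (G.neighborSet v)] : degN G v = G.degree v :=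
  (Nat.card_eq_fintype_card (α := G.neighborSet v)).trans (G.card_neighborSet_eq_degree v)

lemma edge_adj_unique {s t p q q' : V} (hq : (edge s t).Adj p q) (hq' : (edge s t).Adj p q') :
    q = q' := by
  rw [edge_adj] at hq hq'
  grind

lemma degN_induce_compl_singleton_sup_edge_le [Finite V] {v : V} {a z : ↥({v}ᶜ : Set V)}
    (ha : G.Adj a v) (hz : G.Adj z v) (p : ↥({v}ᶜ : Set V)) :
    degN (G.induce {v}ᶜ ⊔ edge a z) p ≤ degN G p := by
  classical
  have hpv : ∀ q, (edge a z).Adj p q → G.Adj p v := by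
    intro q hq
    rw [edge_adj] at hq
    rcases hq with ⟨⟨rfl, -⟩ | ⟨rfl, -⟩, -⟩
    exacts [ha, hz]
  -- the new neighbour of `p`, if any, is sent to `v`
  refine Nat.card_le_card_of_injective (fun q => if h : G.Adj p q.1 then ⟨q.1, h⟩
    else ⟨v, hpv q.1 (q.2.resolve_left h)⟩) ?_
  rintro ⟨q, hq⟩ ⟨q', hq'⟩ heq
  by_cases h : G.Adj p q <;> by_cases h' : G.Adj p q' <;>
    simp only [h, h', dite_true, dite_false, Subtype.mk.injEq] at heq
  · exact Subtype.ext (Subtype.ext heq)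
  · exact absurd heq q.2
  · exact absurd heq.symm q'.2
  · exact Subtype.ext (edge_adj_unique (hq.resolve_left h) (hq'.resolve_left h'))

lemma square_induce_compl_singleton_le_sup_edge {v a b z : V} (ha : a ≠ v) (hz : z ≠ v)
    (haz : a ≠ z) (hab : G.Adj a b) (hN : G.neighborSet v ⊆ {a, b, z}) :
    G.square.induce {v}ᶜ ≤ (G.induce {v}ᶜ ⊔ edge ⟨a, ha⟩ ⟨z, hz⟩).square := by
  set H := G.induce {v}ᶜ ⊔ edge ⟨a, ha⟩ ⟨z, hz⟩
  have hnear : ∀ p : ↥({v}ᶜ : Set V), G.Adj v p → p ∈ insert ⟨a, ha⟩ (H.neighborSet ⟨a, ha⟩) := by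
    intro p hp
    rcases hN hp with hpa | hpb | hpz
    · exact Or.inl (Subtype.ext hpa)
    · refine Or.inr (Or.inl ?_)
      rw [induce_adj, hpb]
      exact hab
    · refine Or.inr (Or.inr ?_)
      rw [edge_adj]
      exact ⟨Or.inl ⟨rfl, Subtype.ext hpz⟩, fun h => haz ((congrArg Subtype.val h).trans hpz)⟩
  exact square_induce_compl_singleton_le le_sup_left
    fun p q hpq hp hq => square_adj_of_mem_insert_neighborSet (hnear p hp) (hnear q hq) hpq

variable [Fintype V] [DecidableEq V] [DecidableRel G.Adj]

lemma degree_square_le (v : V) [Fintype (G.square.neighborSet v)] {Δ : ℕ}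
    (hΔ : ∀ u, G.degree u ≤ Δ) : G.square.degree v ≤ G.degree v * Δ := by
  have hsub : G.square.neighborFinset v ⊆
      (G.neighborFinset v).biUnion fun u => insert u ((G.neighborFinset u).erase v) := by
    intro w hw
    obtain ⟨hne, hvw | ⟨m, hvm, hmw⟩⟩ := (mem_neighborFinset _ _ _).1 hw
    · exact Finset.mem_biUnion.2
        ⟨w, (mem_neighborFinset _ _ _).2 hvw, Finset.mem_insert_self _ _⟩
    · exact Finset.mem_biUnion.2 ⟨m, (mem_neighborFinset _ _ _).2 hvm, Finset.mem_insert_of_mem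
        (Finset.mem_erase.2 ⟨hne.symm, (mem_neighborFinset _ _ _).2 hmw⟩)⟩
  have hterm :
      ∀ u ∈ G.neighborFinset v, (insert u ((G.neighborFinset u).erase v)).card ≤ Δ := by
    intro u hu
    have hvu : v ∈ G.neighborFinset u := by simpa [adj_comm] using hu
    calc _ ≤ ((G.neighborFinset u).erase v).card + 1 := Finset.card_insert_le _ _
      _ = G.degree u := by
        rw [Finset.card_erase_of_mem hvu, Nat.sub_add_cancel (Finset.card_pos.2 ⟨v, hvu⟩),
          card_neighborFinset_eq_degree]
      _ ≤ Δ := hΔ u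
  calc G.square.degree v = (G.square.neighborFinset v).card :=
        (card_neighborFinset_eq_degree _ _).symm
    _ ≤ _ := Finset.card_le_card hsub
    _ ≤ ∑ u ∈ G.neighborFinset v, (insert u ((G.neighborFinset u).erase v)).card :=
      Finset.card_biUnion_le
    _ ≤ (G.neighborFinset v).card • Δ := Finset.sum_le_card_nsmul _ _ _ hterm
    _ = G.degree v * Δ := by rw [card_neighborFinset_eq_degree, smul_eq_mul]

lemma exists_neighborSet_eq_triple {v a b : V} (hv : G.degree v = 3) (ha : G.Adj v a)
    (hb : G.Adj v b) (hab : a ≠ b) : ∃ z, z ≠ a ∧ G.neighborSet v = {a, b, z} := by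
  have hsub : ({a, b} : Finset V) ⊆ G.neighborFinset v := by
    simp [Finset.insert_subset_iff, ha, hb]
  obtain ⟨z, hz⟩ : ∃ z, G.neighborFinset v \ {a, b} = {z} := by
    rw [← Finset.card_eq_one, Finset.card_sdiff_of_subset hsub, card_neighborFinset_eq_degree, hv,
      Finset.card_pair hab]
  have hza : z ≠ a := fun h => by simpa [h] using (Finset.ext_iff.1 hz) z
  refine ⟨z, hza, ?_⟩
  rw [← coe_neighborFinset, ← Finset.union_sdiff_of_subset hsub, hz]
  ext
  simp

end SimpleGraph

open Set

section SimpleArc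

variable {X : Type*}

def IsSimpleArc [TopologicalSpace X] (γ : ℝ → X) (x y : X) : Prop :=
  Continuous γ ∧ γ 0 = x ∧ γ 1 = y ∧ InjOn γ (Icc 0 1)

noncomputable def arcTrans (α β : ℝ → X) (t : ℝ) : X :=
  if t ≤ 1 / 2 then α (2 * t) else β (2 * t - 1)

lemma image_Ioc_eq_insert (γ : ℝ → X) : γ '' Ioc 0 1 = insert (γ 1) (γ '' Ioo 0 1) := by
  rw [← Ioo_insert_right zero_lt_one, image_insert_eq]

lemma image_Icc_eq_insert (γ : ℝ → X) :
    γ '' Icc 0 1 = insert (γ 0) (insert (γ 1) (γ '' Ioo 0 1)) := by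
  rw [← Ioc_insert_left zero_le_one, image_insert_eq, image_Ioc_eq_insert]

lemma arcTrans_image_Ioo_subset (α β : ℝ → X) :
    arcTrans α β '' Ioo 0 1 ⊆ α '' Ioc 0 1 ∪ β '' Ioo 0 1 := by
  rintro _ ⟨t, ⟨ht0, ht1⟩, rfl⟩
  unfold arcTrans
  split_ifs with ht
  · exact Or.inl ⟨2 * t, ⟨by linarith, by linarith⟩, rfl⟩
  · exact Or.inr ⟨2 * t - 1, ⟨by linarith, by linarith⟩, rfl⟩

lemma injOn_arcTrans {α β : ℝ → X} (hα : InjOn α (Icc 0 1)) (hβ : InjOn β (Icc 0 1))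
    (hαβ : Disjoint (α '' Icc 0 1) (β '' Ioc 0 1)) : InjOn (arcTrans α β) (Icc 0 1) := by
  have hmix : ∀ s ∈ Icc (0 : ℝ) 1, ∀ t ∈ Icc (0 : ℝ) 1, s ≤ 1 / 2 → ¬t ≤ 1 / 2 →
      α (2 * s) ≠ β (2 * t - 1) := fun s hs t ht hs' ht' heq =>
    disjoint_left.1 hαβ ⟨2 * s, ⟨by linarith [hs.1], by linarith⟩, rfl⟩
      ⟨2 * t - 1, ⟨by linarith, by linarith [ht.2]⟩, heq.symm⟩
  intro s hs t ht heq
  unfold arcTrans at heq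
  split_ifs at heq with hs' ht' ht'
  · linarith [hα ⟨by linarith [hs.1], by linarith⟩ ⟨by linarith [ht.1], by linarith⟩ heq]
  · exact absurd heq (hmix s hs t ht hs' ht')
  · exact absurd heq.symm (hmix t ht s hs ht' hs')
  · linarith [hβ ⟨by linarith, by linarith [hs.2]⟩ ⟨by linarith, by linarith [ht.2]⟩ heq]

lemma IsSimpleArc.trans [TopologicalSpace X] {α β : ℝ → X} {x y z : X} (hα : IsSimpleArc α x y)
    (hβ : IsSimpleArc β y z) (hαβ : Disjoint (α '' Icc 0 1) (β '' Ioc 0 1)) :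
    IsSimpleArc (arcTrans α β) x z := by
  obtain ⟨hαc, hα0, hα1, hαi⟩ := hα
  obtain ⟨hβc, hβ0, hβ1, hβi⟩ := hβ
  refine ⟨?_, ?_, ?_, injOn_arcTrans hαi hβi hαβ⟩
  · refine Continuous.if_le (hαc.comp (continuous_const.mul continuous_id))
      (hβc.comp ((continuous_const.mul continuous_id).sub continuous_const)) continuous_id
      continuous_const fun t (ht : t = 1 / 2) => ?_
    simp [ht, hα1, hβ0]
  · simp [arcTrans, hα0]
  · norm_num [arcTrans, hβ1]

end SimpleArc

section Drawing

open SimpleGraph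

variable {V W : Type*}

def IsDrawing (G : SimpleGraph V) (pos : V → ℝ × ℝ) (arc : V → V → ℝ → ℝ × ℝ) :
    Prop :=
  Function.Injective pos ∧
    (∀ u v, G.Adj u v →
      IsSimpleArc (arc u v) (pos u) (pos v) ∧ ∀ w, pos w ∉ arc u v '' Ioo 0 1) ∧
    ∀ u v x y, G.Adj u v → G.Adj x y → s(u, v) ≠ s(x, y) →
      Disjoint (arc u v '' Ioo 0 1) (arc x y '' Ioo 0 1)

lemma isPlanar_iff_exists_isDrawing {G : SimpleGraph V} :
    IsPlanar G ↔ ∃ pos arc, IsDrawing G pos arc := by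
  simp only [IsPlanar, IsDrawing, IsSimpleArc, and_assoc]

variable {G : SimpleGraph V} {pos : V → ℝ × ℝ} {arc : V → V → ℝ → ℝ × ℝ}

lemma IsDrawing.comap {H : SimpleGraph W} (h : IsDrawing G pos arc) (f : H ↪g G) :
    IsDrawing H (pos ∘ f) fun p q => arc (f p) (f q) := by
  obtain ⟨hpos, harc, hdisj⟩ := h
  refine ⟨hpos.comp f.injective, fun p q hpq => ?_, fun p q x y hpq hxy hne => ?_⟩
  · obtain ⟨hγ, hvert⟩ := harc _ _ (f.map_adj_iff.2 hpq)
    exact ⟨hγ, fun w => hvert (f w)⟩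
  · refine hdisj _ _ _ _ (f.map_adj_iff.2 hpq) (f.map_adj_iff.2 hxy) fun he => hne ?_
    rw [← Sym2.map_mk, ← Sym2.map_mk] at he
    exact Sym2.map.injective f.injective he

lemma IsPlanar.of_embedding {H : SimpleGraph W} (h : IsPlanar G) (f : H ↪g G) :
    IsPlanar H := by
  obtain ⟨pos, arc, hG⟩ := isPlanar_iff_exists_isDrawing.1 h
  exact isPlanar_iff_exists_isDrawing.2 ⟨_, _, hG.comap f⟩

lemma IsDrawing.sup_edge [DecidableEq V] (h : IsDrawing G pos arc) {a z : V}
    (γ : V → V → ℝ → ℝ × ℝ)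
    (hγ : ∀ p q, s(p, q) = s(a, z) →
      IsSimpleArc (γ p q) (pos p) (pos q) ∧ (∀ w, pos w ∉ γ p q '' Ioo 0 1) ∧
      ∀ x y, G.Adj x y → s(x, y) ≠ s(a, z) →
        Disjoint (γ p q '' Ioo 0 1) (arc x y '' Ioo 0 1)) :
    IsDrawing (G ⊔ edge a z) pos fun p q => if s(p, q) = s(a, z) then γ p q else arc p q := by
  obtain ⟨hpos, harc, hdisj⟩ := h
  have hold : ∀ p q, (G ⊔ edge a z).Adj p q → s(p, q) ≠ s(a, z) → G.Adj p q :=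
    fun p q hpq hne => hpq.resolve_right fun he => hne ((adj_edge _ _).1 he).1.symm
  refine ⟨hpos, fun p q hpq => ?_, fun p q x y hpq hxy hne => ?_⟩
  · by_cases he : s(p, q) = s(a, z)
    · simpa only [he, if_true] using ⟨(hγ p q he).1, (hγ p q he).2.1⟩
    · simpa only [he, if_false] using harc p q (hold p q hpq he)
  · by_cases he : s(p, q) = s(a, z) <;> by_cases he' : s(x, y) = s(a, z) <;>
      simp only [he, he', if_true, if_false]
    · exact absurd (he.trans he'.symm) hne
    · exact (hγ p q he).2.2 x y (hold x y hxy he') he'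
    · exact ((hγ x y he').2.2 p q (hold p q hpq he) he).symm
    · exact hdisj p q x y (hold p q hpq he) (hold x y hxy he') hne

end Drawing

section Suppress

open SimpleGraph

variable {V : Type*} {G : SimpleGraph V} {pos : V → ℝ × ℝ} {arc : V → V → ℝ → ℝ × ℝ}
  {x v y : V}

lemma IsDrawing.arcTrans_image_Ioo_subset (h : IsDrawing G pos arc) (hx : G.Adj x v) :
    arcTrans (arc x v) (arc v y) '' Ioo 0 1 ⊆
      insert (pos v) (arc x v '' Ioo 0 1 ∪ arc v y '' Ioo 0 1) := by
  have := _root_.arcTrans_image_Ioo_subset (arc x v) (arc v y)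
  rwa [image_Ioc_eq_insert, (h.2.1 x v hx).1.2.2.1, insert_union] at this

lemma IsDrawing.isSimpleArc_arcTrans (h : IsDrawing G pos arc) (hx : G.Adj x v) (hy : G.Adj v y)
    (hxy : x ≠ y) : IsSimpleArc (arcTrans (arc x v) (arc v y)) (pos x) (pos y) := by
  obtain ⟨hpos, harc, hdisj⟩ := h
  obtain ⟨hα, hαv⟩ := harc x v hx
  obtain ⟨hβ, hβv⟩ := harc v y hy
  have hne : s(x, v) ≠ s(v, y) := fun he => by
    rcases Sym2.eq_iff.1 he with ⟨h1, -⟩ | ⟨h1, -⟩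
    exacts [hx.ne h1, hxy h1]
  refine hα.trans hβ ?_
  rw [image_Icc_eq_insert, image_Ioc_eq_insert, hα.2.1, hα.2.2.1, hβ.2.2.1]
  simp only [disjoint_insert_left, disjoint_insert_right, mem_insert_iff, not_or]
  exact ⟨⟨fun he => hxy (hpos he).symm, fun he => hy.ne (hpos he).symm, hαv y⟩, hβv x, hβv v,
    hdisj x v v y hx hy hne⟩

lemma IsDrawing.notMem_arcTrans_image (h : IsDrawing G pos arc) (hx : G.Adj x v)
    (hy : G.Adj v y) {w : V} (hw : w ≠ v) :
    pos w ∉ arcTrans (arc x v) (arc v y) '' Ioo 0 1 := fun hmem => by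
  rcases h.arcTrans_image_Ioo_subset hx hmem with he | hα | hβ
  · exact hw (h.1 he)
  · exact (h.2.1 x v hx).2 w hα
  · exact (h.2.1 v y hy).2 w hβ

lemma IsDrawing.disjoint_arcTrans_image (h : IsDrawing G pos arc) (hx : G.Adj x v)
    (hy : G.Adj v y) {p q : V} (hpq : G.Adj p q) (hp : p ≠ v) (hq : q ≠ v) :
    Disjoint (arcTrans (arc x v) (arc v y) '' Ioo 0 1) (arc p q '' Ioo 0 1) := by
  have hv : ∀ {e : Sym2 V}, v ∈ e → e ≠ s(p, q) := fun hve he => by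
    rw [he, Sym2.mem_iff] at hve
    exact hve.elim (hp ∘ Eq.symm) (hq ∘ Eq.symm)
  refine Disjoint.mono_left (h.arcTrans_image_Ioo_subset hx) ?_
  rw [disjoint_insert_left, disjoint_union_left]
  exact ⟨(h.2.1 p q hpq).2 v, h.2.2 _ _ _ _ hx hpq (hv (Sym2.mem_mk_right x v)),
    h.2.2 _ _ _ _ hy hpq (hv (Sym2.mem_mk_left v y))⟩

lemma IsPlanar.induce_compl_singleton_sup_edge (hG : IsPlanar G) {a z : ↥({v}ᶜ : Set V)}
    (ha : G.Adj a v) (hz : G.Adj v z) (haz : a ≠ z) : IsPlanar (G.induce {v}ᶜ ⊔ edge a z) := by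
  classical
  obtain ⟨pos, arc, h⟩ := isPlanar_iff_exists_isDrawing.1 hG
  refine isPlanar_iff_exists_isDrawing.2 ⟨_, _, (h.comap (Embedding.induce {v}ᶜ)).sup_edge
    (fun p q => arcTrans (arc p v) (arc v q)) fun p q he => ?_⟩
  have hp : G.Adj p v ∧ G.Adj v q ∧ p ≠ q := by
    rcases Sym2.eq_iff.1 he with ⟨rfl, rfl⟩ | ⟨rfl, rfl⟩
    exacts [⟨ha, hz, haz⟩, ⟨hz.symm, ha.symm, haz.symm⟩]
  obtain ⟨hpv, hvq, hpq⟩ := hp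
  exact ⟨h.isSimpleArc_arcTrans hpv hvq (Subtype.coe_injective.ne hpq),
    fun w => h.notMem_arcTrans_image hpv hvq w.2,
    fun x y hxy _ => h.disjoint_arcTrans_image hpv hvq hxy x.2 y.2⟩

end Suppress

section Transport

open SimpleGraph

variable {V W : Type*} {G : SimpleGraph V} {H : SimpleGraph W}

lemma degN_iso (φ : G ≃g H) (p : V) : degN H (φ p) = degN G p :=
  (Nat.card_congr (φ.toEquiv.subtypeEquiv fun _ => φ.map_adj_iff.symm)).symm

lemma chi2_le_of_embedding (f : G ↪g H) : chi2 G ≤ chi2 H :=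
  chromaticNumber_mono_of_hom f.squareHom

lemma MinimalCex6.chi2_le_of_card_lt [Fintype V] [Fintype W] (hmin : MinimalCex6 G)
    (hH : IsPlanar H) (hdeg : ∀ p, degN H p ≤ 6) (hcard : Fintype.card W < Fintype.card V) :
    chi2 H ≤ 21 := by
  let ψ := Iso.map (Fintype.equivFin W) H
  have hdegK : ∀ i, degN (H.map (Fintype.equivFin W)) i ≤ 6 := fun i => by
    rw [← ψ.apply_symm_apply i, degN_iso]
    exact hdeg _
  calc chi2 H ≤ chi2 (H.map (Fintype.equivFin W)) := chi2_le_of_embedding ψ.toEmbedding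
    _ ≤ 21 := hmin.2.2.2 _ _ (hH.of_embedding ψ.symm.toEmbedding) hdegK (Or.inl hcard)

end Transport

theorem stmt16_general {V : Type*} [Fintype V] (G : SimpleGraph V) (hmin : MinimalCex6 G)
    (e : PlaneEmbedding G) :
    ¬ ∃ (v : V) (f : e.Faces), degN G v = 3 ∧ e.faceDeg f = 3 ∧
      e.VertexOnFace v f := by
  classical
  rintro ⟨v, f, hv, hf, hvf⟩
  have ⟨hplanar, hdeg6, hchi, _⟩ := hmin
  obtain ⟨a, b, hva, hab, hbv⟩ := e.exists_triangle_of_faceDeg_eq_three hf hvf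
  obtain ⟨z, hza, hN⟩ :=
    G.exists_neighborSet_eq_triple (G.degN_eq_degree v ▸ hv) hva hbv.symm hab.ne
  have hvz : G.Adj v z := by simp [← G.mem_neighborSet, hN]
  have hHchi : chi2 (G.induce {v}ᶜ ⊔ edge ⟨a, hva.ne'⟩ ⟨z, hvz.ne'⟩) ≤ 21 :=
    hmin.chi2_le_of_card_lt
      (hplanar.induce_compl_singleton_sup_edge hva.symm hvz (Subtype.coe_ne_coe.1 hza.symm))
      (fun p => (degN_induce_compl_singleton_sup_edge_le hva.symm hvz.symm p).trans (hdeg6 p))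
      (Fintype.card_lt_of_injective_of_notMem _ Subtype.val_injective (b := v) (by simp))
  have hdeg : G.square.degree v < 21 := by
    refine (G.degree_square_le v (Δ := 6) fun u => G.degN_eq_degree u ▸ hdeg6 u).trans_lt ?_
    rw [← G.degN_eq_degree, hv]
    norm_num
  have hsq := square_induce_compl_singleton_le_sup_edge hva.ne' hvz.ne' hza.symm hab hN.subset
  have hcol : G.square.Colorable 21 :=
    ((chromaticNumber_le_iff_colorable.1 hHchi).mono_left hsq).of_induce_compl_singleton hdeg
  exact hchi.not_ge hcol.chromaticNumber_le

/-- A minimal counterexample to the bound `χ₂ ≤ 21` for planar graphs of maximum degree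
at most 6 does not contain a vertex of degree 3 incident to a triangular face. -/
theorem stmt16 {V : Type*} [Fintype V] [DecidableEq V] (G : SimpleGraph V)
    [DecidableRel G.Adj] (hmin : MinimalCex6 G)
    (e : PlaneEmbedding G) (hsphere : e.IsSphere) :
    ¬ ∃ (v : V) (f : e.Faces), degN G v = 3 ∧ e.faceDeg f = 3 ∧
      e.VertexOnFace v f :=
  stmt16_general G hmin e
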